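/- arXiv:2005.12666 — 3 statements merged into one kernel-verified Lean document; each statement's English description precedes it below -/
import Mathlib

section
/- Conversely, if f : I → ℝ is a smooth positive function on an open interval satisfying f·f'' = (f')² + c and f·f'' = f²·K for a constant K > 0, then on I there exist constants a, b with a² - b² = c/K such that f(t) = a·cosh(√K·t) + b·sinh(√K·t). -/
lemma const_of_deriv0 {s : Set ℝ} (hs : Convex ℝ s) (ho : IsOpen s) (g : ℝ → ℝ)
    (h : ∀ t ∈ s, HasDerivAt g 0 t) {u v : ℝ} (hu : u ∈ s) (hv : v ∈ s) : g u = g v := by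
  apply hs.is_const_of_fderivWithin_eq_zero
    (fun t ht => (h t ht).differentiableAt.differentiableWithinAt) _ hu hv
  intro t ht
  rw [fderivWithin_of_isOpen ho ht, (h t ht).hasFDerivAt.fderiv]
  ext
  simp

/-- Conversely, if f is a smooth positive function on an open interval I
satisfying f·f'' = (f')² + c and f·f'' = f²·K with K > 0, then there exist constants
a, b with a² - b² = c/K such that f(t) = a·cosh(√K t) + b·sinh(√K t) on I. -/
theorem stmt3 (x y : ℝ) (I : Set ℝ) (hI : I = Set.Ioo x y) (hne : I.Nonempty)
    (c K : ℝ) (hK : 0 < K) (f : ℝ → ℝ) (hsm : ContDiffOn ℝ (⊤ : ℕ∞) f I)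
    (hpos : ∀ t ∈ I, 0 < f t)
    (heq1 : ∀ t ∈ I, f t * deriv (deriv f) t = (deriv f t) ^ 2 + c)
    (heq2 : ∀ t ∈ I, f t * deriv (deriv f) t = (f t) ^ 2 * K) :
    ∃ a b : ℝ, a ^ 2 - b ^ 2 = c / K ∧
      ∀ t ∈ I, f t = a * Real.cosh (Real.sqrt K * t) + b * Real.sinh (Real.sqrt K * t) := by
  obtain ⟨t₀, ht₀⟩ := hne
  set s : ℝ := Real.sqrt K with hsdef
  have hs0 : 0 < s := Real.sqrt_pos.mpr hK
  have hs2 : s * s = K := Real.mul_self_sqrt hK.le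
  have hIopen : IsOpen I := hI ▸ isOpen_Ioo
  have hIconv : Convex ℝ I := hI ▸ convex_Ioo x y
  have hdf : ∀ t ∈ I, HasDerivAt f (deriv f t) t := by
    intro t ht
    exact ((hsm t ht).contDiffAt (hIopen.mem_nhds ht)).differentiableAt
      (by simp) |>.hasDerivAt
  have hsm' : ContDiffOn ℝ (⊤ : ℕ∞) (deriv f) I := hsm.deriv_of_isOpen hIopen (by simp)
  have hdf2 : ∀ t ∈ I, HasDerivAt (deriv f) (K * f t) t := by
    intro t ht
    have h1 : HasDerivAt (deriv f) (deriv (deriv f) t) t :=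
      (((hsm' t ht).contDiffAt (hIopen.mem_nhds ht)).differentiableAt
        (by simp)).hasDerivAt
    have hf0 := (hpos t ht).ne'
    have h2 : deriv (deriv f) t = K * f t := by
      apply mul_left_cancel₀ hf0
      rw [heq2 t ht]; ring
    rwa [h2] at h1
  have hC : ∀ t : ℝ, HasDerivAt (fun u => Real.cosh (s * u)) (s * Real.sinh (s * t)) t := by
    intro t
    have := HasDerivAt.cosh ((hasDerivAt_id t).const_mul s)
    simpa [mul_comm] using this
  have hS : ∀ t : ℝ, HasDerivAt (fun u => Real.sinh (s * u)) (s * Real.cosh (s * t)) t := by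
    intro t
    have := HasDerivAt.sinh ((hasDerivAt_id t).const_mul s)
    simpa [mul_comm] using this
  set A : ℝ → ℝ := fun t => f t * Real.cosh (s * t) - deriv f t * Real.sinh (s * t) / s with hA
  set B : ℝ → ℝ := fun t => deriv f t * Real.cosh (s * t) / s - f t * Real.sinh (s * t) with hB
  have hA' : ∀ t ∈ I, HasDerivAt A 0 t := by
    intro t ht
    have h := ((hdf t ht).mul (hC t)).sub (((hdf2 t ht).mul (hS t)).div_const s)
    have key : deriv f t * Real.cosh (s * t) + f t * (s * Real.sinh (s * t)) -
        (K * f t * Real.sinh (s * t) + deriv f t * (s * Real.cosh (s * t))) / s = 0 := by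
      field_simp
      linear_combination f t * Real.sinh (s * t) * hs2
    rwa [key] at h
  have hB' : ∀ t ∈ I, HasDerivAt B 0 t := by
    intro t ht
    have h := (((hdf2 t ht).mul (hC t)).div_const s).sub ((hdf t ht).mul (hS t))
    have key : (K * f t * Real.cosh (s * t) + deriv f t * (s * Real.sinh (s * t))) / s -
        (deriv f t * Real.sinh (s * t) + f t * (s * Real.cosh (s * t))) = 0 := by
      field_simp
      linear_combination (-(f t * Real.cosh (s * t))) * hs2
    rwa [key] at h
  have cosh_sq : ∀ u : ℝ, Real.cosh u ^ 2 - Real.sinh u ^ 2 = 1 := fun u =>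
    Real.cosh_sq_sub_sinh_sq u
  refine ⟨A t₀, B t₀, ?_, ?_⟩
  · have h1 := heq1 t₀ ht₀
    have h2 := heq2 t₀ ht₀
    have hcs := cosh_sq (s * t₀)
    have hc' : f t₀ ^ 2 * K - deriv f t₀ ^ 2 = c := by linear_combination h1 - h2
    simp only [hA, hB]
    rw [eq_div_iff hK.ne']
    field_simp
    linear_combination (K * ((f t₀)^2 * s^2 - (deriv f t₀)^2)) * hcs +
      (deriv f t₀)^2 * hs2 + s^2 * hc'
  · intro t ht
    have hAc : A t = A t₀ := const_of_deriv0 hIconv hIopen A hA' ht ht₀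
    have hBc : B t = B t₀ := const_of_deriv0 hIconv hIopen B hB' ht ht₀
    rw [← hAc, ← hBc]
    have hcs := cosh_sq (s * t)
    simp only [hA, hB]
    field_simp
    linear_combination (-(f t * s)) * hcs
end

section
/- The second derivative of φ(x) = (τ(x), x, τ(x)) in directions X, Y ∈ ℝⁿ equals Hess τ(X,Y)·(1,0,...,0,1), where Hess τ is the Euclidean Hessian of τ. Consequently, if Δτ(x) ≠ 0 for all x ∈ Ω (Δ the Euclidean Laplacian), then the mean curvature vector H(x) = (Δτ(x)/n)·(1,0,...,0,1) is null and nonzero at every point, so φ is marginally trapped. -/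
noncomputable def Lor (n : ℕ) (u v : Fin (n + 2) → ℝ) : ℝ :=
  (∑ i, u i * v i) - 2 * u 0 * v 0

/-- The immersion φ(x) = (τ(x), x, τ(x)). -/
noncomputable def phi (n : ℕ) (τ : (Fin n → ℝ) → ℝ) (x : Fin n → ℝ) : Fin (n + 2) → ℝ :=
  Fin.cons (τ x) (Fin.snoc x (τ x))

/-- The vector ξ = (1, 0, ..., 0, 1) ∈ ℝ^{n+2}₁. -/
noncomputable def xi (n : ℕ) : Fin (n + 2) → ℝ :=
  Fin.cons 1 (Fin.snoc (0 : Fin n → ℝ) 1)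

/-- The Euclidean Hessian of τ at x in directions X, Y. -/
noncomputable def hess (n : ℕ) (τ : (Fin n → ℝ) → ℝ) (x X Y : Fin n → ℝ) : ℝ :=
  fderiv ℝ (fun y => fderiv ℝ τ y X) x Y

/-- The Euclidean Laplacian of τ at x. -/
noncomputable def lap (n : ℕ) (τ : (Fin n → ℝ) → ℝ) (x : Fin n → ℝ) : ℝ :=
  ∑ i : Fin n, hess n τ x (Pi.single i 1) (Pi.single i 1)

/-! φ is the linear map `y ↦ (0, y, 0)` plus `τ y • ξ`. Differentiating twice kills the linear
part and leaves `Hess τ (X, Y) • ξ`; since `ξ` is null, so is every multiple of it. -/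

noncomputable def middleInclusion (n : ℕ) : (Fin n → ℝ) →L[ℝ] (Fin (n + 2) → ℝ) :=
  ContinuousLinearMap.pi (Fin.cons 0 (Fin.snoc (fun k => ContinuousLinearMap.proj k) 0))

theorem phi_eq_smul_xi_add_middleInclusion (n : ℕ) (τ : (Fin n → ℝ) → ℝ) :
    phi n τ = fun y => τ y • xi n + middleInclusion n y := by
  funext y i
  refine Fin.cases ?_ (fun j => Fin.lastCases ?_ (fun k => ?_) j) i <;>
    simp [phi, xi, middleInclusion]

theorem fderiv_phi {n : ℕ} {τ : (Fin n → ℝ) → ℝ} {y : Fin n → ℝ}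
    (hτ : DifferentiableAt ℝ τ y) :
    fderiv ℝ (phi n τ) y = (fderiv ℝ τ y).smulRight (xi n) + middleInclusion n := by
  rw [phi_eq_smul_xi_add_middleInclusion,
    fderiv_fun_add (hτ.smul_const _) (middleInclusion n).differentiableAt,
    fderiv_smul_const hτ, (middleInclusion n).fderiv]

theorem fderiv_fderiv_phi_apply {n : ℕ} {τ : (Fin n → ℝ) → ℝ} (hτ : Differentiable ℝ τ)
    {x X : Fin n → ℝ} (hX : DifferentiableAt ℝ (fun y => fderiv ℝ τ y X) x) (Y : Fin n → ℝ) :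
    fderiv ℝ (fun y => fderiv ℝ (phi n τ) y X) x Y = hess n τ x X Y • xi n := by
  have hfderiv_apply : (fun y => fderiv ℝ (phi n τ) y X)
      = fun y => fderiv ℝ τ y X • xi n + middleInclusion n X := by
    funext y
    simp [fderiv_phi (hτ y)]
  rw [hfderiv_apply, fderiv_add_const, fderiv_smul_const hX]
  simp [hess]

theorem Lor_smul_smul (n : ℕ) (a b : ℝ) (u v : Fin (n + 2) → ℝ) :
    Lor n (a • u) (b • v) = a * b * Lor n u v := by
  have hsum : ∑ i, a * u i * (b * v i) = a * b * ∑ i, u i * v i := by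
    rw [Finset.mul_sum]
    exact Finset.sum_congr rfl fun _ _ => by ring
  simp only [Lor, Pi.smul_apply, smul_eq_mul, hsum]
  ring

theorem Lor_xi_xi (n : ℕ) : Lor n (xi n) (xi n) = 0 := by
  rw [Lor, Fin.sum_univ_succ, Fin.sum_univ_castSucc]
  norm_num [xi]

theorem xi_ne_zero (n : ℕ) : xi n ≠ 0 :=
  fun h => by simpa [xi] using congrFun h 0

theorem stmt6_general (n : ℕ) (hn : 0 < n) (Ω : Set (Fin n → ℝ))
    (τ : (Fin n → ℝ) → ℝ) (hτ : ContDiff ℝ 2 τ) :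
    (∀ x ∈ Ω, ∀ X Y : Fin n → ℝ,
        fderiv ℝ (fun y => fderiv ℝ (phi n τ) y X) x Y = hess n τ x X Y • xi n) ∧
    ((∀ x ∈ Ω, lap n τ x ≠ 0) →
      ∀ x ∈ Ω,
        Lor n ((lap n τ x / n) • xi n) ((lap n τ x / n) • xi n) = 0 ∧
        (lap n τ x / n) • xi n ≠ 0) := by
  have hDτ : Differentiable ℝ (fderiv ℝ τ) :=
    (hτ.fderiv_right (by norm_num)).differentiable one_ne_zero
  refine ⟨fun x _ X Y => ?_, fun hlap x hx => ⟨?_, ?_⟩⟩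
  · have hX : DifferentiableAt ℝ (fun y => fderiv ℝ τ y X) x :=
      ((ContinuousLinearMap.apply ℝ ℝ X).differentiable.comp hDτ).differentiableAt
    exact fderiv_fderiv_phi_apply (hτ.differentiable (by norm_num)) hX Y
  · rw [Lor_smul_smul, Lor_xi_xi, mul_zero]
  · exact smul_ne_zero (div_ne_zero (hlap x hx) (Nat.cast_ne_zero.mpr hn.ne')) (xi_ne_zero n)

/-- The second derivative of φ(x) = (τ(x), x, τ(x)) in directions X, Y equals
Hess τ(X,Y)·(1,0,...,0,1). Consequently, if Δτ never vanishes on Ω, the mean curvature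
vector H = (Δτ/n)·(1,0,...,0,1) is null and nonzero at every point, so φ is marginally
trapped. -/
theorem stmt6 (n : ℕ) (hn : 0 < n) (Ω : Set (Fin n → ℝ)) (hΩ : IsOpen Ω)
    (τ : (Fin n → ℝ) → ℝ) (hτ : ContDiff ℝ 2 τ) :
    (∀ x ∈ Ω, ∀ X Y : Fin n → ℝ,
        fderiv ℝ (fun y => fderiv ℝ (phi n τ) y X) x Y = hess n τ x X Y • xi n) ∧
    ((∀ x ∈ Ω, lap n τ x ≠ 0) →
      ∀ x ∈ Ω,
        Lor n ((lap n τ x / n) • xi n) ((lap n τ x / n) • xi n) = 0 ∧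
        (lap n τ x / n) • xi n ≠ 0) :=
  stmt6_general n hn Ω τ hτ
end

section
/- Let f : ℝ → ℝ be smooth with f'' nowhere zero, and define φ : ℝ² → ℝ⁴₁ by φ(x,y) = (f(x), x, y, f(x)). Then the induced metric is dx² + dy² (flat), the second fundamental form satisfies h(∂_x, ∂_x) = f''(x)·(1,0,0,1), h(∂_x,∂_y) = h(∂_y,∂_y) = 0, and the mean curvature vector H = (f''(x)/2)·(1,0,0,1) is null at every point; moreover the relative null space at every point contains ∂_y, so the surface is a marginally trapped surface with positive relative nullity. -/
def L4 (u v : Fin 4 → ℝ) : ℝ := -(u 0 * v 0) + u 1 * v 1 + u 2 * v 2 + u 3 * v 3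

noncomputable def px (f : ℝ → ℝ → Fin 4 → ℝ) (x y : ℝ) : Fin 4 → ℝ :=
  fun i => deriv (fun t => f t y i) x

noncomputable def py (f : ℝ → ℝ → Fin 4 → ℝ) (x y : ℝ) : Fin 4 → ℝ :=
  fun i => deriv (fun t => f x t i) y

/-- φ(x,y) = (f(x), x, y, f(x)). -/
noncomputable def phi10 (f : ℝ → ℝ) (x y : ℝ) : Fin 4 → ℝ := ![f x, x, y, f x]

lemma px_phi10 (f : ℝ → ℝ) (x y : ℝ) :
    px (phi10 f) x y = ![deriv f x, 1, 0, deriv f x] := by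
  funext i
  fin_cases i <;> simp [px, phi10]

lemma py_phi10 (f : ℝ → ℝ) (x y : ℝ) :
    py (phi10 f) x y = ![0, 0, 1, 0] := by
  funext i
  fin_cases i <;> simp [py, phi10]

/-- for f smooth with f'' nowhere zero and φ(x,y) = (f(x), x, y, f(x)),
the induced metric is dx² + dy² (flat), the second fundamental form satisfies
h(∂x,∂x) = f''(x)·(1,0,0,1) (this vector being normal), h(∂x,∂y) = h(∂y,∂y) = 0,
and H = (f''(x)/2)·(1,0,0,1) is null and nonzero at every point; the relative null space
contains ∂y, so the surface is marginally trapped with positive relative nullity. -/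
theorem stmt10 (f : ℝ → ℝ) (hf : ContDiff ℝ (⊤ : ℕ∞) f)
    (hf'' : ∀ x, deriv (deriv f) x ≠ 0) :
    ∀ x y : ℝ,
      L4 (px (phi10 f) x y) (px (phi10 f) x y) = 1 ∧
      L4 (py (phi10 f) x y) (py (phi10 f) x y) = 1 ∧
      L4 (px (phi10 f) x y) (py (phi10 f) x y) = 0 ∧
      px (px (phi10 f)) x y = deriv (deriv f) x • ![1, 0, 0, 1] ∧
      L4 ![1, 0, 0, 1] (px (phi10 f) x y) = 0 ∧
      L4 ![1, 0, 0, 1] (py (phi10 f) x y) = 0 ∧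
      px (py (phi10 f)) x y = 0 ∧
      py (py (phi10 f)) x y = 0 ∧
      (let H := (deriv (deriv f) x / 2) • (![1, 0, 0, 1] : Fin 4 → ℝ);
        L4 H H = 0 ∧ H ≠ 0) := by
  intro x y
  refine ⟨?_, ?_, ?_, ?_, ?_, ?_, ?_, ?_, ?_, ?_⟩
  · simp [L4, px_phi10]
  · simp [L4, py_phi10]
  · simp [L4, px_phi10, py_phi10]
  · funext i
    have h0 : (fun t => phi10 f t y 0) = f := by funext t; simp [phi10]
    have h3 : (fun t => phi10 f t y 3) = f := by funext t; simp [phi10]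
    have h1 : (fun t => phi10 f t y 1) = fun t => t := by funext t; simp [phi10]
    have h2 : (fun t => phi10 f t y 2) = fun _ => y := by funext t; simp [phi10]
    fin_cases i <;> simp only [px, Pi.smul_apply, smul_eq_mul] <;>
      simp [h0, h1, h2, h3, deriv_const]
  · simp [L4, px_phi10]
  · simp [L4, py_phi10]
  · funext i
    have h : ∀ j, (fun t => py (phi10 f) t y j) = fun t => (![0,0,1,0] : Fin 4 → ℝ) j := by
      intro j; funext t; rw [py_phi10]
    fin_cases i <;> simp only [px, Pi.zero_apply] <;> rw [h] <;> simp
  · funext i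
    have h : ∀ j, (fun t => phi10 f x t j) = fun t => (![f x, x, t, f x] : Fin 4 → ℝ) j := by
      intro j; funext t; rfl
    fin_cases i <;> simp [py, phi10]
  · simp [L4]
  · intro h
    have := congrFun h 0
    simp at this
    exact hf'' x (by linarith)
end
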